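/- arXiv:math/0402052 — 5 statements merged into one kernel-verified Lean document; each statement's English description precedes it below -/
import Mathlib

section
/- Let W be a Coxeter group with Bruhat order ≤ and length function ℓ. For all x ≤ y in W, the sum over z with x ≤ z ≤ y of (-1)^{ℓ(x)}·(-1)^{ℓ(z)} equals 1 if x = y and 0 otherwise (Verma's identity). -/
/-!
STATEMENT 0 (Verma's identity).  Let `W` be a Coxeter group (given by a Coxeter system `cs`)
with length function `ℓ = cs.length` and Bruhat order `≤` (defined below as the
reflexive-transitive closure of multiplication by reflections increasing length).
For all `x ≤ y` in `W`, `∑_{x ≤ z ≤ y} (-1)^{ℓ(x)} (-1)^{ℓ(z)} = δ_{x,y}`.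
The (finite) sum over the Bruhat interval is expressed as a `finsum` over
`{z | x ≤ z ∧ z ≤ y}` (Bruhat intervals are finite).
-/

open CoxeterSystem

/-- The Bruhat order on a Coxeter group: `x ≤ y` iff one can pass from `x` to `y` by
successively multiplying on the right by reflections, increasing the length each time. -/
def BruhatLE {B W : Type*} [Group W] {M : CoxeterMatrix B} (cs : CoxeterSystem M W) :
    W → W → Prop :=
  Relation.ReflTransGen
    (fun a b => ∃ t : W, cs.IsReflection t ∧ b = a * t ∧ cs.length a < cs.length b)

namespace VermaAux

open List

set_option linter.unusedSectionVars false
open scoped Classical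

variable {B W : Type*} [Group W] {M : CoxeterMatrix B} (cs : CoxeterSystem M W)

local prefix:100 "s" => cs.simple
local prefix:100 "π" => cs.wordProd
local prefix:100 "ℓ" => cs.length

def conjAct : W →* MulAut (W → ℤˣ) where
  toFun w :=
  { toFun := fun f t => f (w⁻¹ * t * w)
    invFun := fun f t => f (w * t * w⁻¹)
    left_inv := fun f => by funext t; group
    right_inv := fun f => by funext t; group
    map_mul' := fun f g => rfl }
  map_one' := by ext f t; simp
  map_mul' := fun u v => by ext f t; simp [mul_assoc]

lemma conjAct_apply (w : W) (f : W → ℤˣ) (t : W) : conjAct w f t = f (w⁻¹ * t * w) := rfl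

noncomputable def dl (u : W) : W → ℤˣ := fun t => if t = u then -1 else 1

lemma dl_apply_ne {u t : W} (h : t ≠ u) : dl u t = 1 := if_neg h

lemma dl_apply_self (u : W) : dl u u = -1 := if_pos rfl

lemma conjAct_dl (w u : W) : conjAct w (dl u) = dl (w * u * w⁻¹) := by
  funext t
  have h : (w⁻¹ * t * w = u) ↔ (t = w * u * w⁻¹) := by
    constructor
    · intro h; subst h; group
    · intro h; subst h; group
  simp only [conjAct_apply, dl, h]

lemma dl_mul_self (u : W) : dl u * dl u = 1 := by
  funext t
  simp only [Pi.mul_apply, dl, Pi.one_apply]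
  split <;> simp

lemma sdp_pow (a : W → ℤˣ) (g : W) (n : ℕ) :
    (⟨a, g⟩ : (W → ℤˣ) ⋊[conjAct] W) ^ n =
      ⟨∏ k ∈ Finset.range n, conjAct (g ^ k) a, g ^ n⟩ := by
  induction n with
  | zero =>
    have : ((⟨a, g⟩ : (W → ℤˣ) ⋊[conjAct] W) ^ 0) = 1 := pow_zero _
    rw [this]
    ext
    · simp
    · simp
  | succ n ih =>
    rw [pow_succ, ih]
    ext
    · rw [SemidirectProduct.mul_left]
      simp [Finset.prod_range_succ]
    · rw [SemidirectProduct.mul_right]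
      simp [pow_succ]

lemma prod_pair_eq (m : ℕ) (f : ℕ → W → ℤˣ) :
    ∏ k ∈ Finset.range m, (f (2 * k) * f (2 * k + 1)) = ∏ n ∈ Finset.range (2 * m), f n := by
  induction m with
  | zero => simp
  | succ m ih =>
    rw [Finset.prod_range_succ, ih]
    have h2 : 2 * (m + 1) = (2 * m + 1) + 1 := by ring
    rw [h2, Finset.prod_range_succ, Finset.prod_range_succ, mul_assoc]

lemma simple_conj_pow (i j : B) (k : ℕ) :
    (s i * s j) ^ k * s i * ((s i * s j) ^ k)⁻¹ = (s i * s j) ^ (2 * k) * s i := by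
  have base : s i * (s i * s j)⁻¹ = (s i * s j) * s i := by
    rw [mul_inv_rev, cs.inv_simple, cs.inv_simple]
    group
  have key : ∀ k : ℕ, s i * ((s i * s j)⁻¹) ^ k = (s i * s j) ^ k * s i := by
    intro k
    induction k with
    | zero => simp
    | succ k ih =>
      calc s i * ((s i * s j)⁻¹) ^ (k + 1)
          = (s i * (s i * s j)⁻¹) * ((s i * s j)⁻¹) ^ k := by
            rw [pow_succ', ← mul_assoc]
        _ = (s i * s j) * (s i * ((s i * s j)⁻¹) ^ k) := by rw [base, mul_assoc]
        _ = (s i * s j) ^ (k + 1) * s i := by rw [ih, ← mul_assoc, ← pow_succ']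
  rw [mul_assoc, ← inv_pow, key, ← mul_assoc, ← pow_add, two_mul]

lemma simple_conj_pow' (i j : B) (k : ℕ) :
    (s i * s j) ^ k * (s i * s j * (s i)⁻¹) * ((s i * s j) ^ k)⁻¹ =
      (s i * s j) ^ (2 * k + 1) * s i := by
  have h0 : s i * s j * (s i)⁻¹ = s i * s j * s i := by rw [cs.inv_simple]
  have l1 : (s i * s j) ^ k * (s i * s j * s i) = (s i * s j) ^ (k+1) * s i := by
    rw [← mul_assoc, ← pow_succ]
  rw [h0, l1, pow_succ', mul_assoc (s i * s j) ((s i * s j) ^ k) (s i),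
    mul_assoc (s i * s j), simple_conj_pow, ← mul_assoc, ← pow_succ']

lemma liftable : CoxeterMatrix.IsLiftable M (fun i => (⟨dl (s i), s i⟩ :
    (W → ℤˣ) ⋊[conjAct] W)) := by
  intro i j
  have hmul : (⟨dl (s i), s i⟩ : (W → ℤˣ) ⋊[conjAct] W) * ⟨dl (s j), s j⟩ =
      ⟨dl (s i) * dl (s i * s j * (s i)⁻¹), s i * s j⟩ := by
    ext
    · rw [SemidirectProduct.mul_left]; simp [conjAct_dl]
    · rw [SemidirectProduct.mul_right]
  rw [hmul, sdp_pow]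
  have hq : (s i * s j) ^ (M i j) = 1 := cs.simple_mul_simple_pow i j
  have hterm : ∀ k : ℕ, conjAct ((s i * s j) ^ k) (dl (s i) * dl (s i * s j * (s i)⁻¹)) =
      dl ((s i * s j) ^ (2 * k) * s i) * dl ((s i * s j) ^ (2 * k + 1) * s i) := by
    intro k
    rw [map_mul, conjAct_dl, conjAct_dl, simple_conj_pow, simple_conj_pow']
  have hleft : (∏ k ∈ Finset.range (M i j),
      conjAct ((s i * s j) ^ k) (dl (s i) * dl (s i * s j * (s i)⁻¹))) = 1 := by
    calc (∏ k ∈ Finset.range (M i j), conjAct ((s i * s j) ^ k) (dl (s i) * dl (s i * s j * (s i)⁻¹)))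
        = ∏ k ∈ Finset.range (M i j),
            (dl ((s i * s j) ^ (2 * k) * s i) * dl ((s i * s j) ^ (2 * k + 1) * s i)) :=
          Finset.prod_congr rfl (fun k _ => hterm k)
      _ = ∏ n ∈ Finset.range (2 * M i j), dl ((s i * s j) ^ n * s i) :=
          prod_pair_eq (M i j) (fun n => dl ((s i * s j) ^ n * s i))
      _ = ∏ n ∈ Finset.range (M i j + M i j), dl ((s i * s j) ^ n * s i) := by
          rw [two_mul]
      _ = (∏ n ∈ Finset.range (M i j), dl ((s i * s j) ^ n * s i)) *
          ∏ n ∈ Finset.range (M i j), dl ((s i * s j) ^ (M i j + n) * s i) := by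
          rw [Finset.prod_range_add]
      _ = 1 := by
          rw [← Finset.prod_mul_distrib]
          apply Finset.prod_eq_one
          intro k _
          rw [pow_add, hq, one_mul, dl_mul_self]
  rw [hleft, hq]
  rfl

noncomputable def nuHom : W →* (W → ℤˣ) ⋊[conjAct] W :=
  cs.lift ⟨fun i => ⟨dl (s i), s i⟩, liftable cs⟩

lemma nuHom_simple (i : B) : nuHom cs (s i) = ⟨dl (s i), s i⟩ :=
  cs.lift_apply_simple _ i

lemma nuHom_right (w : W) : (nuHom cs w).right = w := by
  have h : (SemidirectProduct.rightHom.comp (nuHom cs)) = MonoidHom.id W := by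
    apply cs.ext_simple
    intro i
    simp [nuHom_simple, SemidirectProduct.rightHom]
  calc (nuHom cs w).right = (SemidirectProduct.rightHom.comp (nuHom cs)) w := rfl
    _ = w := by rw [h]; rfl

noncomputable def nu (w : W) : W → ℤˣ := (nuHom cs w).left

lemma nu_mul (u v t : W) : nu cs (u * v) t = nu cs u t * nu cs v (u⁻¹ * t * u) := by
  unfold nu
  rw [map_mul, SemidirectProduct.mul_left]
  rw [Pi.mul_apply, nuHom_right]
  rfl

lemma nu_one (t : W) : nu cs 1 t = 1 := by unfold nu; rw [map_one]; rfl

lemma nu_simple (i : B) (t : W) : nu cs (s i) t = dl (s i) t := by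
  unfold nu; rw [nuHom_simple]

lemma nu_inv (w t : W) : nu cs w⁻¹ t = nu cs w (w * t * w⁻¹) := by
  have h := nu_mul cs w w⁻¹ (w * t * w⁻¹)
  rw [mul_inv_cancel, nu_one] at h
  have h2 : w⁻¹ * (w * t * w⁻¹) * w = t := by group
  rw [h2] at h
  calc nu cs w⁻¹ t = (nu cs w (w * t * w⁻¹))⁻¹ * (nu cs w (w * t * w⁻¹) * nu cs w⁻¹ t) := by group
    _ = (nu cs w (w * t * w⁻¹))⁻¹ := by rw [← h, mul_one]
    _ = nu cs w (w * t * w⁻¹) := Int.units_inv_eq_self _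

noncomputable def nuR (w t : W) : ℤˣ := nu cs w⁻¹ t

lemma nuR_mul (u v t : W) : nuR cs (u * v) t = nuR cs v t * nuR cs u (v * t * v⁻¹) := by
  unfold nuR
  rw [mul_inv_rev, nu_mul, inv_inv]

lemma nuR_wordProd (ω : List B) (t : W) (h : t ∉ cs.rightInvSeq ω) : nuR cs (π ω) t = 1 := by
  induction ω with
  | nil =>
    unfold nuR
    simp only [wordProd_nil, inv_one]
    exact nu_one cs t
  | cons i ω ih =>
    rw [cs.wordProd_cons, nuR_mul]
    rw [rightInvSeq] at h
    simp only [List.mem_cons, not_or] at h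
    rw [ih h.2]
    have h1 : π ω * t * (π ω)⁻¹ ≠ s i := by
      intro hc
      apply h.1
      rw [← hc]
      group
    have h2 : nuR cs (s i) (π ω * t * (π ω)⁻¹) = 1 := by
      unfold nuR
      rw [cs.inv_simple, nu_simple]
      exact dl_apply_ne h1
    rw [h2, one_mul]

lemma nuR_reflection (t : W) (ht : cs.IsReflection t) : nuR cs t t = -1 := by
  obtain ⟨w, i, rfl⟩ := ht
  have hts : (w * s i * w⁻¹)⁻¹ = w * s i * w⁻¹ := by
    rw [mul_inv_rev, mul_inv_rev, cs.inv_simple, inv_inv]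
    group
  unfold nuR
  rw [hts]
  have e1 : nu cs (w * (s i * w⁻¹)) (w * s i * w⁻¹)
      = nu cs w (w * s i * w⁻¹) * nu cs (s i * w⁻¹) (w⁻¹ * (w * s i * w⁻¹) * w) := nu_mul ..
  have e2 : w⁻¹ * (w * s i * w⁻¹) * w = s i := by group
  have e3 : nu cs (s i * w⁻¹) (s i) = nu cs (s i) (s i) * nu cs w⁻¹ ((s i)⁻¹ * s i * s i) :=
    nu_mul ..
  have e4 : (s i)⁻¹ * s i * s i = s i := by group
  have e5 : nu cs w⁻¹ (s i) = nu cs w (w * s i * w⁻¹) := nu_inv ..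
  have e6 : nu cs (s i) (s i) = -1 := by rw [nu_simple]; exact dl_apply_self _
  have harg : nu cs (w * s i * w⁻¹) = nu cs (w * (s i * w⁻¹)) := by rw [mul_assoc]
  rw [harg, e1, e2, e3, e4, e5, e6]
  generalize nu cs w (w * s i * w⁻¹) = a
  have : a * a = 1 := by
    rcases Int.units_eq_one_or a with h | h <;> rw [h] <;> rfl
  rw [neg_one_mul, mul_neg, mul_comm, this]

lemma nuR_eq_neg_one_mem (w t : W) (hw : nuR cs w t = -1) (ω : List B)
    (hω : w = π ω) : t ∈ cs.rightInvSeq ω := by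
  by_contra hmem
  rw [hω, nuR_wordProd cs ω t hmem] at hw
  exact absurd hw (by decide)

/-- Key criterion: descent along a reflection is detected by `nuR`. -/
theorem length_mul_lt_iff (w t : W) (ht : cs.IsReflection t) :
    ℓ (w * t) < ℓ w ↔ nuR cs w t = -1 := by
  constructor
  · intro h
    rcases Int.units_eq_one_or (nuR cs w t) with h1 | h1
    · exfalso
      have hwt : nuR cs (w * t) t = -1 := by
        rw [nuR_mul]
        have : t * t * t⁻¹ = t := by group
        rw [this, h1, nuR_reflection cs t ht]
        rfl
      obtain ⟨ω, hred, heq⟩ := cs.exists_reduced_word' (w * t)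
      have hmem := nuR_eq_neg_one_mem cs (w * t) t hwt ω heq
      have := (cs.isRightInversion_of_mem_rightInvSeq hred hmem).2
      rw [← heq] at this
      rw [mul_assoc, ht.mul_self, mul_one] at this
      omega
    · exact h1
  · intro h
    obtain ⟨ω, hred, heq⟩ := cs.exists_reduced_word' w
    have hmem := nuR_eq_neg_one_mem cs w t h ω heq
    have := (cs.isRightInversion_of_mem_rightInvSeq hred hmem).2
    rwa [← heq] at this

theorem length_mul_gt_iff (w t : W) (ht : cs.IsReflection t) :
    ℓ w < ℓ (w * t) ↔ nuR cs w t = 1 := by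
  have hne := ht.length_mul_left_ne w
  rcases Int.units_eq_one_or (nuR cs w t) with h1 | h1
  · constructor
    · intro _; exact h1
    · intro _
      rcases Nat.lt_or_ge (ℓ w) (ℓ (w * t)) with h | h
      · exact h
      · exfalso
        have := (length_mul_lt_iff cs w t ht).mpr
        rcases Nat.lt_or_ge (ℓ (w * t)) (ℓ w) with h2 | h2
        · rw [(length_mul_lt_iff cs w t ht).mp h2] at h1
          exact absurd h1 (by decide)
        · omega
  · rw [h1]
    constructor
    · intro h
      exfalso
      have := (length_mul_lt_iff cs w t ht).mpr h1
      omega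
    · intro h; exact absurd h (by decide)

/-- Strong exchange property. -/
theorem strong_exchange (ω : List B) (t : W) (ht : cs.IsReflection t)
    (h : ℓ (π ω * t) < ℓ (π ω)) :
    ∃ j, j < ω.length ∧ π ω * t = π (ω.eraseIdx j) := by
  have hnu := (length_mul_lt_iff cs (π ω) t ht).mp h
  have hmem := nuR_eq_neg_one_mem cs (π ω) t hnu ω rfl
  rw [List.mem_iff_getElem] at hmem
  obtain ⟨j, hj, hget⟩ := hmem
  rw [cs.length_rightInvSeq] at hj
  refine ⟨j, hj, ?_⟩
  have := cs.wordProd_mul_getD_rightInvSeq ω j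
  rw [List.getD_eq_getElem _ _ (by rw [cs.length_rightInvSeq]; exact hj)] at this
  rw [← this, hget]

/-! ### Deletion and reduced sublists -/

lemma exists_reduced_sublist : ∀ n (ω : List B), ω.length ≤ n →
    ∃ ω', ω'.Sublist ω ∧ cs.IsReduced ω' ∧ π ω' = π ω := by
  intro n
  induction n with
  | zero =>
    intro ω hω
    rw [Nat.le_zero, List.length_eq_zero_iff] at hω
    subst hω
    exact ⟨[], List.Sublist.refl _, by simp [CoxeterSystem.IsReduced], rfl⟩
  | succ n ih =>
    intro ω hω
    rcases eq_or_ne (ω.length) 0 with h0 | h0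
    · rw [List.length_eq_zero_iff] at h0
      subst h0
      exact ⟨[], List.Sublist.refl _, by simp [CoxeterSystem.IsReduced], rfl⟩
    · obtain ⟨ω₀, i, rfl⟩ : ∃ ω₀ i, ω = ω₀ ++ [i] := by
        rcases List.eq_nil_or_concat ω with h | ⟨ω₀, i, h⟩
        · exact absurd (by rw [h]; rfl) h0
        · exact ⟨ω₀, i, by rw [h, List.concat_eq_append]⟩
      have hlen₀ : ω₀.length ≤ n := by
        have := hω
        simp only [List.length_append, List.length_singleton] at this
        omega
      obtain ⟨κ, hsub, hred, heq⟩ := ih ω₀ hlen₀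
      rcases cs.length_mul_simple (π ω₀) i with hup | hdown
      · -- ascent: κ ++ [i] is a reduced sublist
        refine ⟨κ ++ [i], ?_, ?_, ?_⟩
        · exact List.Sublist.append hsub (List.Sublist.refl _)
        · unfold CoxeterSystem.IsReduced
          rw [cs.wordProd_append, heq]
          simp only [List.length_append, List.length_singleton, cs.wordProd_singleton]
          rw [hup, ← heq, hred]
        · rw [cs.wordProd_append, cs.wordProd_append, heq]
      · -- descent: strong exchange on κ
        have hdesc : ℓ (π κ * s i) < ℓ (π κ) := by rw [heq]; omega
        obtain ⟨j, hj, hej⟩ := strong_exchange cs κ (s i) (cs.isReflection_simple i) hdesc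
        have hlen : (κ.eraseIdx j).length ≤ n := by
          have h1 := List.length_eraseIdx_add_one (l := κ) (i := j) hj
          have h2 := hsub.length_le
          omega
        obtain ⟨κ', hsub', hred', heq'⟩ := ih (κ.eraseIdx j) hlen
        refine ⟨κ', ?_, hred', ?_⟩
        · exact (hsub'.trans (List.eraseIdx_sublist κ j)).trans
            (hsub.trans (List.sublist_append_left ω₀ [i]))
        · rw [heq', ← hej, heq, cs.wordProd_append, cs.wordProd_singleton]

lemma exists_reduced_sublist' (ω : List B) :
    ∃ ω', ω'.Sublist ω ∧ cs.IsReduced ω' ∧ π ω' = π ω :=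
  exists_reduced_sublist cs ω.length ω le_rfl

/-! ### Bruhat order basics -/

lemma bstep (x t : W) (ht : cs.IsReflection t) (h : ℓ x < ℓ (x * t)) : BruhatLE cs x (x * t) :=
  Relation.ReflTransGen.single ⟨t, ht, rfl, h⟩

lemma bstep' (y t : W) (ht : cs.IsReflection t) (h : ℓ (y * t) < ℓ y) :
    BruhatLE cs (y * t) y := by
  have h2 : y * t * t = y := by rw [mul_assoc, ht.mul_self, mul_one]
  have := bstep cs (y * t) t ht (by rw [h2]; exact h)
  rwa [h2] at this

lemma brefl (x : W) : BruhatLE cs x x := Relation.ReflTransGen.refl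

lemma btrans {x y z : W} (h1 : BruhatLE cs x y) (h2 : BruhatLE cs y z) : BruhatLE cs x z :=
  Relation.ReflTransGen.trans h1 h2

lemma length_le_of_ble {x y : W} (h : BruhatLE cs x y) : ℓ x ≤ ℓ y := by
  induction h with
  | refl => exact le_rfl
  | tail hb hstep ih =>
    obtain ⟨t, ht, rfl, hl⟩ := hstep
    omega

lemma eq_or_length_lt {x y : W} (h : BruhatLE cs x y) : x = y ∨ ℓ x < ℓ y := by
  induction h with
  | refl => exact Or.inl rfl
  | @tail b c hb hstep ih =>
    obtain ⟨t, ht, rfl, hl⟩ := hstep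
    right
    rcases ih with rfl | hlt
    · exact hl
    · omega

lemma eq_of_ble_of_length_le {x y : W} (h : BruhatLE cs x y) (h2 : ℓ y ≤ ℓ x) : x = y := by
  rcases eq_or_length_lt cs h with h | h
  · exact h
  · omega

/-- Subword property, forward direction. -/
lemma exists_sublist_of_ble {x y : W} (h : BruhatLE cs x y) :
    ∀ ω, cs.IsReduced ω → π ω = y → ∃ ω', ω'.Sublist ω ∧ cs.IsReduced ω' ∧ π ω' = x := by
  induction h with
  | refl => exact fun ω hr he => ⟨ω, List.Sublist.refl _, hr, he⟩
  | @tail b c hb hstep ih =>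
    obtain ⟨t, ht, rfl, hl⟩ := hstep
    intro ω hr he
    have hdesc : ℓ (π ω * t) < ℓ (π ω) := by
      rw [he, mul_assoc, ht.mul_self, mul_one]
      exact hl
    obtain ⟨j, hj, hej⟩ := strong_exchange cs ω t ht hdesc
    have hb' : π (ω.eraseIdx j) = b := by
      rw [← hej, he, mul_assoc, ht.mul_self, mul_one]
    obtain ⟨κ, hsubκ, hredκ, heqκ⟩ := exists_reduced_sublist' cs (ω.eraseIdx j)
    obtain ⟨ω', hsub', hred', heq'⟩ := ih κ hredκ (by rw [heqκ, hb'])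
    exact ⟨ω', (hsub'.trans hsubκ).trans (List.eraseIdx_sublist ω j), hred', heq'⟩

lemma finite_ble (y : W) : {z | BruhatLE cs z y}.Finite := by
  obtain ⟨ω, hred, rfl⟩ := cs.exists_reduced_word' y
  have hsub : {z | BruhatLE cs z (π ω)} ⊆ (fun l => π l) '' {l | l.Sublist ω} := by
    intro z hz
    obtain ⟨ω', hs, _, heq⟩ := exists_sublist_of_ble cs hz ω hred rfl
    exact ⟨ω', hs, heq⟩
  exact (((List.finite_toSet ω.sublists).subset
    (fun l hl => List.mem_sublists.mpr hl)).image _).subset hsub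

/-! ### Lifting properties -/

lemma sublist_concat_cases {α : Type*} (ω' ω₀ : List α) (i : α) (h : ω'.Sublist (ω₀ ++ [i])) :
    ω'.Sublist ω₀ ∨ ∃ ω₁, ω₁.Sublist ω₀ ∧ ω' = ω₁ ++ [i] := by
  have h1 : ω'.reverse.Sublist (i :: ω₀.reverse) := by simpa using h.reverse
  rcases List.sublist_cons_iff.mp h1 with h2 | ⟨r, hr, h3⟩
  · left; simpa using h2.reverse
  · right
    refine ⟨r.reverse, by simpa using h3.reverse, ?_⟩
    have : ω'.reverse.reverse = (i :: r).reverse := by rw [hr]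
    simpa using this

def StA (n : ℕ) : Prop := ∀ ω : List B, cs.IsReduced ω → ω.length ≤ n →
  ∀ ω' : List B, ω'.Sublist ω → BruhatLE cs (π ω') (π ω)

def StB (n : ℕ) : Prop := ∀ y : W, ℓ y ≤ n → ∀ i : B, ℓ y < ℓ (y * s i) →
  ∀ x, BruhatLE cs x y → BruhatLE cs (x * s i) (y * s i)

def StC (n : ℕ) : Prop := ∀ y : W, ℓ y ≤ n → ∀ i : B, ℓ (y * s i) < ℓ y →
  ∀ x, BruhatLE cs x y → ℓ x < ℓ (x * s i) → BruhatLE cs x (y * s i)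

theorem stABC : ∀ n, StA cs n ∧ StB cs n ∧ StC cs n := by
  intro n
  induction n using Nat.strong_induction_on with
  | _ n IH =>
  refine ⟨?_, ?_, ?_⟩
  · -- StA
    intro ω hred hlen ω' hsub
    rcases List.eq_nil_or_concat ω with rfl | ⟨ω₀, i, rfl⟩
    · rw [List.sublist_nil.mp hsub]
      exact brefl cs _
    rw [List.concat_eq_append] at hsub ⊢
    have hπ : π (ω₀ ++ [i]) = π ω₀ * s i := by
      rw [cs.wordProd_append, cs.wordProd_singleton]
    have hlen' : ω₀.length + 1 ≤ n := by
      have : (ω₀ ++ [i]).length ≤ n := by simpa using hlen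
      simpa using this
    have hval : ℓ (π ω₀ * s i) = ω₀.length + 1 := by
      rw [← hπ]
      have := hred
      unfold CoxeterSystem.IsReduced at this
      simpa using this
    have h1 := cs.length_wordProd_le ω₀
    have hred0 : cs.IsReduced ω₀ := by
      unfold CoxeterSystem.IsReduced
      rcases cs.length_mul_simple (π ω₀) i with h | h <;> omega
    have hasc : ℓ (π ω₀) < ℓ (π ω₀ * s i) := by
      rw [hred0] at *
      omega
    have hstep : BruhatLE cs (π ω₀) (π (ω₀ ++ [i])) := by
      rw [hπ]
      exact bstep cs _ _ (cs.isReflection_simple i) hasc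
    rcases sublist_concat_cases ω' ω₀ i hsub with h | ⟨ω₁, hsub1, rfl⟩
    · exact btrans cs ((IH (n-1) (by omega)).1 ω₀ hred0 (by omega) ω' h) hstep
    · have hu : BruhatLE cs (π ω₁) (π ω₀) := (IH (n-1) (by omega)).1 ω₀ hred0 (by omega) ω₁ hsub1
      have hπ' : π (ω₁ ++ [i]) = π ω₁ * s i := by
        rw [cs.wordProd_append, cs.wordProd_singleton]
      rcases Nat.lt_or_gt_of_ne (cs.length_mul_simple_ne (π ω₁) i) with hd | ha
      · have hds : BruhatLE cs (π ω₁ * s i) (π ω₁) :=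
          bstep' cs _ _ (cs.isReflection_simple i) hd
        rw [hπ']
        exact btrans cs (btrans cs hds hu) hstep
      · rw [hπ', hπ]
        exact (IH (n-1) (by omega)).2.1 (π ω₀) (by omega) i hasc (π ω₁) hu
  · -- StB
    intro y hy i hyi x hxy
    rcases Relation.ReflTransGen.cases_tail hxy with heq | ⟨u, hxu, hstep⟩
    · rw [heq]
      exact brefl cs _
    obtain ⟨t, ht, rfl, hl⟩ := hstep
    have hn1 : 1 ≤ n := by omega
    rcases Nat.lt_or_gt_of_ne (cs.length_mul_simple_ne u i) with hdu | hau
    · -- descent at u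
      rcases Nat.lt_or_gt_of_ne (cs.length_mul_simple_ne x i) with hdx | hax
      · -- descent at x : chain x*s ≤ x ≤ u*t ≤ u*t*s
        have c1 : BruhatLE cs (x * s i) x := bstep' cs x (s i) (cs.isReflection_simple i) hdx
        have c2 : BruhatLE cs (u * t) (u * t * s i) :=
          bstep cs _ _ (cs.isReflection_simple i) hyi
        exact btrans cs c1 (btrans cs hxy c2)
      · -- ascent at x
        have hC : BruhatLE cs x (u * s i) :=
          (IH (n-1) (by omega)).2.2 u (by omega) i hdu x hxu hax
        have husi : (u * s i) * s i = u := cs.simple_mul_simple_cancel_right i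
        have hascusi : ℓ (u * s i) < ℓ ((u * s i) * s i) := by rw [husi]; exact hdu
        have hB : BruhatLE cs (x * s i) ((u * s i) * s i) :=
          (IH (n-1) (by omega)).2.1 (u * s i) (by omega) i hascusi x hC
        rw [husi] at hB
        have c2 : BruhatLE cs u (u * t) := bstep cs u t ht hl
        have c3 : BruhatLE cs (u * t) (u * t * s i) :=
          bstep cs _ _ (cs.isReflection_simple i) hyi
        exact btrans cs hB (btrans cs c2 c3)
    · -- ascent at u
      have h1 : BruhatLE cs (x * s i) (u * s i) :=
        (IH (n-1) (by omega)).2.1 u (by omega) i hau x hxu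
      have hrefl' : cs.IsReflection (s i * t * s i) := by
        have := ht.conj (s i)
        rwa [cs.inv_simple] at this
      have heq2 : (u * s i) * (s i * t * s i) = u * t * s i := by
        calc (u * s i) * (s i * t * s i) = u * (s i * s i) * (t * s i) := by group
          _ = u * (t * s i) := by rw [cs.simple_mul_simple_self, mul_one]
          _ = u * t * s i := by rw [mul_assoc]
      have hlt2 : ℓ (u * s i) < ℓ ((u * s i) * (s i * t * s i)) := by
        rw [heq2]
        have hle : ℓ (u * s i) ≤ ℓ u + 1 := by
          have := cs.length_mul_le u (s i)
          simpa [cs.length_simple] using this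
        omega
      have hstep2 : BruhatLE cs (u * s i) ((u * s i) * (s i * t * s i)) :=
        bstep cs _ _ hrefl' hlt2
      rw [heq2] at hstep2
      exact btrans cs h1 hstep2
  · -- StC
    intro y hy i hyi x hxy hxasc
    obtain ⟨κ, hκred, hκeq⟩ := cs.exists_reduced_word' (y * s i)
    have hylen : ℓ (y * s i) + 1 = ℓ y := by
      rcases cs.length_mul_simple y i with h | h <;> omega
    have hκlen : κ.length = ℓ (y * s i) := by
      rw [hκeq]
      exact hκred.symm
    have hωred : cs.IsReduced (κ ++ [i]) := by
      unfold CoxeterSystem.IsReduced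
      rw [cs.wordProd_append, cs.wordProd_singleton, ← hκeq,
        cs.simple_mul_simple_cancel_right]
      simp only [List.length_append, List.length_singleton]
      omega
    have hωeq : π (κ ++ [i]) = y := by
      rw [cs.wordProd_append, cs.wordProd_singleton, ← hκeq,
        cs.simple_mul_simple_cancel_right]
    obtain ⟨ω', hsub, hred', heq'⟩ := exists_sublist_of_ble cs hxy (κ ++ [i]) hωred hωeq
    rcases sublist_concat_cases ω' κ i hsub with h | ⟨ω₁, hsub1, rfl⟩
    · have hA := (IH (n-1) (by omega)).1 κ hκred (by omega) ω' h
      rw [heq'] at hA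
      rwa [← hκeq] at hA
    · exfalso
      have hx1 : ℓ x = ω₁.length + 1 := by
        rw [← heq']
        have := hred'
        unfold CoxeterSystem.IsReduced at this
        simpa using this
      have hx2 : x * s i = π ω₁ := by
        rw [← heq', cs.wordProd_append, cs.wordProd_singleton,
          cs.simple_mul_simple_cancel_right]
      have := cs.length_wordProd_le ω₁
      rw [← hx2] at this
      omega

lemma lift_b {x y : W} {i : B} (hxy : BruhatLE cs x y) (h : ℓ y < ℓ (y * s i)) :
    BruhatLE cs (x * s i) (y * s i) :=
  (stABC cs (ℓ y)).2.1 y le_rfl i h x hxy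

lemma lift_c {x y : W} {i : B} (hxy : BruhatLE cs x y) (h : ℓ (y * s i) < ℓ y)
    (hx : ℓ x < ℓ (x * s i)) : BruhatLE cs x (y * s i) :=
  (stABC cs (ℓ y)).2.2 y le_rfl i h x hxy hx

lemma lift_a {x y : W} {i : B} (hxy : BruhatLE cs x y) (h : ℓ (y * s i) < ℓ y) :
    BruhatLE cs (x * s i) y := by
  rcases Nat.lt_or_gt_of_ne (cs.length_mul_simple_ne x i) with hdx | hax
  · exact btrans cs (bstep' cs x (s i) (cs.isReflection_simple i) hdx) hxy
  · have h1 := lift_c cs hxy h hax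
    have h2 : ℓ (y * s i) < ℓ ((y * s i) * s i) := by
      rw [cs.simple_mul_simple_cancel_right]
      exact h
    have := lift_b cs h1 h2
    rwa [cs.simple_mul_simple_cancel_right] at this

lemma lift_bb {x y : W} {i : B} (hxy : BruhatLE cs x y) (h : ℓ (y * s i) < ℓ y)
    (hx : ℓ (x * s i) < ℓ x) : BruhatLE cs (x * s i) (y * s i) := by
  have h1 := lift_a cs hxy h
  have h2 : ℓ (x * s i) < ℓ ((x * s i) * s i) := by
    rw [cs.simple_mul_simple_cancel_right]
    exact hx
  exact lift_c cs h1 h h2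

/-! ### The alternating sum over Bruhat intervals -/

lemma finite_itv (x y : W) : {z | BruhatLE cs x z ∧ BruhatLE cs z y}.Finite :=
  (finite_ble cs y).subset (fun _ hz => hz.2)

noncomputable def itv (x y : W) : Finset W := (finite_itv cs x y).toFinset

lemma mem_itv {x y z : W} : z ∈ itv cs x y ↔ BruhatLE cs x z ∧ BruhatLE cs z y := by
  unfold itv
  rw [Set.Finite.mem_toFinset]
  rfl

noncomputable def Sm (x y : W) : ℤ := ∑ z ∈ itv cs x y, (-1 : ℤ) ^ ℓ z

lemma itv_empty {x y : W} (h : ¬ BruhatLE cs x y) : itv cs x y = ∅ := by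
  ext z
  simp only [mem_itv cs, Finset.notMem_empty, iff_false]
  rintro ⟨h1, h2⟩
  exact h (btrans cs h1 h2)

lemma itv_self (x : W) : itv cs x x = {x} := by
  ext z
  rw [mem_itv cs, Finset.mem_singleton]
  constructor
  · rintro ⟨h1, h2⟩
    exact (eq_of_ble_of_length_le cs h1 (length_le_of_ble cs h2)).symm
  · rintro rfl
    exact ⟨brefl cs z, brefl cs z⟩

lemma Sm_empty {x y : W} (h : ¬ BruhatLE cs x y) : Sm cs x y = 0 := by
  unfold Sm
  rw [itv_empty cs h, Finset.sum_empty]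

lemma length_succ_of_asc {z : W} {i : B} (h : ℓ z < ℓ (z * s i)) :
    ℓ (z * s i) = ℓ z + 1 := by
  rcases cs.length_mul_simple z i with h1 | h1 <;> omega

lemma sign_pair {z : W} {i : B} (h : ℓ z < ℓ (z * s i)) :
    (-1 : ℤ) ^ ℓ z + (-1 : ℤ) ^ ℓ (z * s i) = 0 := by
  rw [length_succ_of_asc cs h, pow_succ]
  ring

lemma mul_simple_ne {z : W} (i : B) : z * s i ≠ z := by
  intro h
  exact cs.length_mul_simple_ne z i (by rw [h])

theorem sm_zero : ∀ n, ∀ y : W, ℓ y ≤ n → ∀ x, BruhatLE cs x y → x ≠ y → Sm cs x y = 0 := by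
  intro n
  induction n using Nat.strong_induction_on with
  | _ n IH =>
  intro y hy x hxy hne
  have hlxy : ℓ x < ℓ y := by
    rcases eq_or_length_lt cs hxy with h | h
    · exact absurd h hne
    · exact h
  have hy1 : y ≠ 1 := by
    rintro rfl
    rw [cs.length_one] at hlxy
    omega
  obtain ⟨i, hdy⟩ := cs.exists_rightDescent_of_ne_one hy1
  rw [CoxeterSystem.IsRightDescent] at hdy
  have hylen : ℓ (y * s i) + 1 = ℓ y := by
    rcases cs.length_mul_simple y i with h | h <;> omega
  rcases Nat.lt_or_gt_of_ne (cs.length_mul_simple_ne x i) with hdx | hax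
  · -- descent at x
    -- split the interval
    classical
    have hsplit := Finset.sum_filter_add_sum_filter_not (itv cs x y)
      (fun z => BruhatLE cs x (z * s i)) (fun z => (-1 : ℤ) ^ ℓ z)
    -- the paired part is zero
    have hpair : (∑ z ∈ (itv cs x y).filter (fun z => BruhatLE cs x (z * s i)),
        (-1 : ℤ) ^ ℓ z) = 0 := by
      apply Finset.sum_involution (fun z _ => z * s i)
      · intro z hz
        simp only [Finset.mem_filter] at hz
        obtain ⟨hzI, hzs⟩ := hz
        rw [mem_itv cs] at hzI
        rcases Nat.lt_or_gt_of_ne (cs.length_mul_simple_ne z i) with hdz | haz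
        · have : ℓ (z * s i) < ℓ ((z * s i) * s i) := by
            rw [cs.simple_mul_simple_cancel_right]; exact hdz
          have := sign_pair cs this
          rw [cs.simple_mul_simple_cancel_right] at this
          linarith
        · exact sign_pair cs haz
      · intro z hz _
        exact mul_simple_ne cs i
      · intro z hz
        simp only [Finset.mem_filter] at hz ⊢
        obtain ⟨hzI, hzs⟩ := hz
        rw [mem_itv cs] at hzI
        constructor
        · rw [mem_itv cs]
          exact ⟨hzs, lift_a cs hzI.2 hdy⟩
        · rw [cs.simple_mul_simple_cancel_right]
          exact hzI.1
      · intro z hz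
        exact cs.simple_mul_simple_cancel_right i
    -- the unpaired part
    have hbij : (∑ z ∈ (itv cs x y).filter (fun z => ¬ BruhatLE cs x (z * s i)),
        (-1 : ℤ) ^ ℓ z) =
        - ∑ u ∈ (itv cs (x * s i) (y * s i)).filter (fun u => ¬ BruhatLE cs x u),
          (-1 : ℤ) ^ ℓ u := by
      rw [← Finset.sum_neg_distrib]
      apply Finset.sum_nbij' (fun z => z * s i) (fun u => u * s i)
      · -- maps into
        intro z hz
        simp only [Finset.mem_filter] at hz ⊢
        obtain ⟨hzI, hzs⟩ := hz
        rw [mem_itv cs] at hzI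
        have hdz : ℓ (z * s i) < ℓ z := by
          rcases Nat.lt_or_gt_of_ne (cs.length_mul_simple_ne z i) with h | h
          · exact h
          · exact absurd (btrans cs hzI.1 (bstep cs z (s i) (cs.isReflection_simple i) h)) hzs
        refine ⟨?_, ?_⟩
        · rw [mem_itv cs]
          exact ⟨lift_bb cs hzI.1 hdz hdx, lift_bb cs hzI.2 hdy hdz⟩
        · exact hzs
      · -- maps back
        intro u hu
        simp only [Finset.mem_filter] at hu ⊢
        obtain ⟨huI, hxu⟩ := hu
        rw [mem_itv cs] at huI
        have hau : ℓ u < ℓ (u * s i) := by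
          rcases Nat.lt_or_gt_of_ne (cs.length_mul_simple_ne u i) with h | h
          · exfalso
            apply hxu
            have := lift_a cs huI.1 h
            rwa [cs.simple_mul_simple_cancel_right] at this
          · exact h
        have hyasc : ℓ (y * s i) < ℓ ((y * s i) * s i) := by
          rw [cs.simple_mul_simple_cancel_right]; exact hdy
        have husy : BruhatLE cs (u * s i) y := by
          have := lift_b cs huI.2 hyasc
          rwa [cs.simple_mul_simple_cancel_right] at this
        have hxus : BruhatLE cs x (u * s i) := by
          have hxasc : ℓ (x * s i) < ℓ ((x * s i) * s i) := by
            rw [cs.simple_mul_simple_cancel_right]; exact hdx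
          have := lift_b cs huI.1 hau
          rwa [cs.simple_mul_simple_cancel_right] at this
        refine ⟨?_, ?_⟩
        · rw [mem_itv cs]
          exact ⟨hxus, husy⟩
        · rwa [cs.simple_mul_simple_cancel_right]
      · intro z _
        exact cs.simple_mul_simple_cancel_right i
      · intro u _
        exact cs.simple_mul_simple_cancel_right i
      · -- signs
        intro z hz
        simp only [Finset.mem_filter] at hz
        obtain ⟨hzI, hzs⟩ := hz
        rw [mem_itv cs] at hzI
        have hdz : ℓ (z * s i) < ℓ z := by
          rcases Nat.lt_or_gt_of_ne (cs.length_mul_simple_ne z i) with h | h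
          · exact h
          · exact absurd (btrans cs hzI.1 (bstep cs z (s i) (cs.isReflection_simple i) h)) hzs
        have : ℓ (z * s i) < ℓ ((z * s i) * s i) := by
          rw [cs.simple_mul_simple_cancel_right]; exact hdz
        have hsp := sign_pair cs this
        rw [cs.simple_mul_simple_cancel_right] at hsp
        linarith
    -- now identify the filtered sum over the lower interval
    have hsub : (itv cs (x * s i) (y * s i)).filter (fun u => BruhatLE cs x u) =
        itv cs x (y * s i) := by
      ext u
      simp only [Finset.mem_filter, mem_itv cs]
      constructor
      · rintro ⟨⟨h1, h2⟩, h3⟩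
        exact ⟨h3, h2⟩
      · rintro ⟨h1, h2⟩
        refine ⟨⟨?_, h2⟩, h1⟩
        exact btrans cs (bstep' cs x (s i) (cs.isReflection_simple i) hdx) h1
    have e1 : Sm cs x y = ∑ z ∈ (itv cs x y).filter (fun z => ¬ BruhatLE cs x (z * s i)),
        (-1 : ℤ) ^ ℓ z := by
      unfold Sm
      rw [← hsplit, hpair, zero_add]
    have hxsys : BruhatLE cs (x * s i) (y * s i) := lift_bb cs hxy hdy hdx
    have hne2 : x * s i ≠ y * s i := fun h => hne (mul_right_cancel h)
    have hSm1 : Sm cs (x * s i) (y * s i) = 0 :=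
      IH (n-1) (by omega) (y * s i) (by omega) (x * s i) hxsys hne2
    have hSm2 : (∑ u ∈ (itv cs (x * s i) (y * s i)).filter (fun u => BruhatLE cs x u),
        (-1 : ℤ) ^ ℓ u) = Sm cs x (y * s i) := by
      rw [hsub]
      rfl
    have hSm3 : Sm cs x (y * s i) = 0 := by
      by_cases hxys : BruhatLE cs x (y * s i)
      · refine IH (n-1) (by omega) (y * s i) (by omega) x hxys ?_
        intro h
        rw [h, cs.simple_mul_simple_cancel_right] at hdx
        omega
      · exact Sm_empty cs hxys
    have hJ : (∑ u ∈ (itv cs (x * s i) (y * s i)).filter (fun u => BruhatLE cs x u),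
          (-1 : ℤ) ^ ℓ u) +
        (∑ u ∈ (itv cs (x * s i) (y * s i)).filter (fun u => ¬ BruhatLE cs x u),
          (-1 : ℤ) ^ ℓ u) = Sm cs (x * s i) (y * s i) := by
      unfold Sm
      exact Finset.sum_filter_add_sum_filter_not _ _ _
    rw [e1, hbij]
    rw [hSm2, hSm3] at hJ
    rw [hSm1] at hJ
    linarith
  · -- ascent at x : full involution
    unfold Sm
    apply Finset.sum_involution (fun z _ => z * s i)
    · intro z hz
      rw [mem_itv cs] at hz
      rcases Nat.lt_or_gt_of_ne (cs.length_mul_simple_ne z i) with hdz | haz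
      · have h2 : ℓ (z * s i) < ℓ ((z * s i) * s i) := by
          rw [cs.simple_mul_simple_cancel_right]; exact hdz
        have := sign_pair cs h2
        rw [cs.simple_mul_simple_cancel_right] at this
        linarith
      · exact sign_pair cs haz
    · intro z _ _
      exact mul_simple_ne cs i
    · intro z hz
      rw [mem_itv cs] at hz ⊢
      obtain ⟨h1, h2⟩ := hz
      refine ⟨?_, lift_a cs h2 hdy⟩
      rcases Nat.lt_or_gt_of_ne (cs.length_mul_simple_ne z i) with hdz | haz
      · exact lift_c cs h1 hdz hax
      · exact btrans cs h1 (bstep cs z (s i) (cs.isReflection_simple i) haz)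
    · intro z hz
      exact cs.simple_mul_simple_cancel_right i

end VermaAux

open VermaAux in
open scoped Classical in
theorem verma_identity {B W : Type*} [Group W] {M : CoxeterMatrix B}
    (cs : CoxeterSystem M W) (x y : W) (hxy : BruhatLE cs x y) :
    (∑ᶠ z ∈ {z : W | BruhatLE cs x z ∧ BruhatLE cs z y},
        ((-1 : ℤ) ^ cs.length x * (-1 : ℤ) ^ cs.length z)) =
      if x = y then 1 else 0 := by
  rcases eq_or_ne x y with rfl | hne
  · have hset : {z : W | BruhatLE cs x z ∧ BruhatLE cs z x} = {x} := by
      ext z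
      simp only [Set.mem_setOf_eq, Set.mem_singleton_iff]
      constructor
      · rintro ⟨h1, h2⟩
        exact (eq_of_ble_of_length_le cs h1 (length_le_of_ble cs h2)).symm
      · rintro rfl
        exact ⟨brefl cs z, brefl cs z⟩
    rw [hset, finsum_mem_singleton, if_pos rfl, ← pow_add]
    exact Even.neg_one_pow ⟨cs.length x, rfl⟩
  · rw [if_neg hne]
    have hcoe : {z : W | BruhatLE cs x z ∧ BruhatLE cs z y} = ↑(itv cs x y) :=
      (finite_itv cs x y).coe_toFinset.symm
    rw [hcoe, finsum_mem_coe_finset, ← Finset.mul_sum]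
    have h0 : Sm cs x y = 0 := sm_zero cs (cs.length y) y le_rfl x hxy hne
    unfold Sm at h0
    rw [h0, mul_zero]
end

section
/- Let R be a commutative ring of prime characteristic p that is finitely generated as an algebra over a perfect field k. Then the ring of k-linear differential operators on R equals the union over n ≥ 0 of End_{R^{p^n}}(R), where R^{p^n} is the subring of p^n-th powers. In particular, D_k(R) is independent of the base perfect field k. -/
/-!
STATEMENT 2.  Let `k` be a perfect field of characteristic `p > 0` and `R` a finitely
generated `k`-algebra.  The ring of `k`-linear differential operators `D_k(R) ⊆ End_k(R)`
is defined inductively: `D⁰ = R` (acting by multiplication) and `φ ∈ Dⁿ⁺¹` iff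
`[φ, r] ∈ Dⁿ` for all `r ∈ R`; `D_k(R) = ⋃ₙ Dⁿ`.  Then
`D_k(R) = ⋃ₙ End_{R^{pⁿ}}(R)`, where an element of `End_{R^{pⁿ}}(R)` is an endomorphism
`φ` with `φ(r^{pⁿ} x) = r^{pⁿ} φ(x)` for all `r, x ∈ R`.
(In particular `D_k(R)` does not depend on the perfect base field `k`.)
-/

/-- The filtration of `End_k(R)` by order of differential operators:
`D⁰` consists of multiplication operators, and `φ ∈ Dⁿ⁺¹` iff all commutators
`[φ, r] = φ ∘ (r·) - (r·) ∘ φ` lie in `Dⁿ`. -/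
def DiffOpFilt (k R : Type*) [CommRing k] [CommRing R] [Algebra k R] :
    ℕ → Set (R →ₗ[k] R)
  | 0 => Set.range fun r : R => r • (LinearMap.id : R →ₗ[k] R)
  | n + 1 => {φ | ∀ r : R,
      φ.comp (r • (LinearMap.id : R →ₗ[k] R)) - r • φ ∈ DiffOpFilt k R n}

/-- The ring of `k`-linear (Grothendieck) differential operators on `R`,
as a subset of `End_k(R)`. -/
def DiffOps (k R : Type*) [CommRing k] [CommRing R] [Algebra k R] :
    Set (R →ₗ[k] R) :=
  {φ | ∃ n : ℕ, φ ∈ DiffOpFilt k R n}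

/-!
`End_k(R)` is a module over `R ⊗[k] R` via `(a ⊗ b) • φ = a • φ ∘ (b •)`, and `1 ⊗ r - r ⊗ 1`
acts as the commutator `[φ, r]`. These elements generate the kernel `I` of multiplication
`R ⊗[k] R → R`, so `φ` has order at most `n` iff `I ^ (n + 1)` annihilates `φ`. As `R` is finitely
generated, so is `I`, hence `φ` is a differential operator iff `I` lies in the radical of its
annihilator, i.e. iff some `(1 ⊗ r - r ⊗ 1) ^ p ^ e = 1 ⊗ r ^ p ^ e - r ^ p ^ e ⊗ 1` annihilates
`φ` for every `r`, which says exactly that `φ` commutes with all `r ^ p ^ e`.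
-/

open TensorProduct

lemma Ideal.mem_torsionOf_smul_iff {A M : Type*} [CommSemiring A] [AddCommMonoid M] [Module A M]
    (a b : A) (m : M) : a ∈ Ideal.torsionOf A M (b • m) ↔ a * b ∈ Ideal.torsionOf A M m := by
  simp [Ideal.mem_torsionOf_iff, mul_smul]

lemma Ideal.exists_pow_le_iff_le_radical {A : Type*} [CommSemiring A] {I J : Ideal A}
    (hI : I.FG) : (∃ n, I ^ n ≤ J) ↔ I ≤ J.radical :=
  ⟨fun ⟨n, h⟩ _ hx => ⟨n, h (Ideal.pow_mem_pow hx n)⟩,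
    fun h => Ideal.exists_pow_le_of_le_radical_of_fg h hI⟩

lemma Ideal.span_range_le_radical_iff {A ι : Type*} [CommSemiring A] {g : ι → A}
    (hg : (Ideal.span (Set.range g)).FG) {p : ℕ} (hp : 1 < p) (J : Ideal A) :
    Ideal.span (Set.range g) ≤ J.radical ↔ ∃ e, ∀ i, g i ^ p ^ e ∈ J := by
  constructor
  · intro h
    obtain ⟨N, hN⟩ := Ideal.exists_pow_le_of_le_radical_of_fg h hg
    exact ⟨N, fun i => hN <| Ideal.pow_le_pow_right (Nat.lt_pow_self hp).le <|
      Ideal.pow_mem_pow (Ideal.subset_span (Set.mem_range_self i)) _⟩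
  · rintro ⟨e, he⟩
    rw [Ideal.span_le, Set.range_subset_iff]
    exact fun i => ⟨p ^ e, he i⟩

lemma charP_tensorProduct {k A B : Type*} [Field k] [CommRing A] [Algebra k A] [Ring B]
    [Algebra k B] [Nontrivial B] (p : ℕ) [CharP A p] : CharP (A ⊗[k] B) p :=
  charP_of_injective_algebraMap
    (Algebra.TensorProduct.includeLeft_injective (S := A) (algebraMap k B).injective) p

lemma one_tmul_sub_tmul_one_pow_char_pow {k R : Type*} [CommRing k] [CommRing R] [Algebra k R]
    (p : ℕ) [Fact p.Prime] [CharP (R ⊗[k] R) p] (r : R) (e : ℕ) :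
    ((1 : R) ⊗ₜ[k] r - r ⊗ₜ[k] (1 : R)) ^ p ^ e =
      (1 : R) ⊗ₜ[k] (r ^ p ^ e) - (r ^ p ^ e) ⊗ₜ[k] (1 : R) := by
  rw [sub_pow_char_pow, Algebra.TensorProduct.tmul_pow, Algebra.TensorProduct.tmul_pow, one_pow]

section TensorAction

variable {k R : Type*} [CommRing k] [CommRing R] [Algebra k R]

def endMulRight : R →ₐ[k] Module.End k (R →ₗ[k] R) :=
  AlgHom.ofLinearMap ((LinearMap.llcomp k R R R).flip ∘ₗ (Algebra.lmul k R).toLinearMap)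
    (by ext; simp) (fun r s => by ext; simp [mul_comm r s, mul_assoc])

def endTensorAction : R ⊗[k] R →ₐ[k] Module.End k (R →ₗ[k] R) :=
  Algebra.TensorProduct.lift (Algebra.lsmul k k (R →ₗ[k] R)) endMulRight fun a b => by
    ext; simp [endMulRight, Module.End.mul_apply]

@[simp]
lemma endTensorAction_tmul_apply (a b : R) (φ : R →ₗ[k] R) (x : R) :
    endTensorAction (a ⊗ₜ[k] b) φ x = a * φ (b * x) := by
  simp [endTensorAction, endMulRight]

abbrev endTensorModule : Module (R ⊗[k] R) (R →ₗ[k] R) :=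
  Module.compHom _ (endTensorAction : R ⊗[k] R →ₐ[k] _).toRingHom

attribute [local instance] endTensorModule

lemma smul_eq_endTensorAction (a : R ⊗[k] R) (φ : R →ₗ[k] R) :
    a • φ = endTensorAction a φ := rfl

lemma one_tmul_sub_tmul_one_smul (r : R) (φ : R →ₗ[k] R) :
    ((1 : R) ⊗ₜ[k] r - r ⊗ₜ[k] (1 : R)) • φ = φ.comp (r • LinearMap.id) - r • φ := by
  ext x; simp [smul_eq_endTensorAction]

lemma one_tmul_sub_tmul_one_mem_torsionOf_iff (r : R) (φ : R →ₗ[k] R) :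
    (1 : R) ⊗ₜ[k] r - r ⊗ₜ[k] (1 : R) ∈ Ideal.torsionOf (R ⊗[k] R) (R →ₗ[k] R) φ ↔
      ∀ x, φ (r * x) = r * φ x := by
  simp [Ideal.mem_torsionOf_iff, LinearMap.ext_iff, sub_eq_zero, smul_eq_endTensorAction]

lemma kaehlerIdeal_le_torsionOf_iff (φ : R →ₗ[k] R) :
    KaehlerDifferential.ideal k R ≤ Ideal.torsionOf (R ⊗[k] R) (R →ₗ[k] R) φ ↔
      ∀ r x, φ (r * x) = r * φ x := by
  simp only [← KaehlerDifferential.span_range_eq_ideal, Ideal.span_le, Set.range_subset_iff,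
    SetLike.mem_coe, one_tmul_sub_tmul_one_mem_torsionOf_iff]

lemma mem_diffOpFilt_zero_iff (φ : R →ₗ[k] R) :
    φ ∈ DiffOpFilt k R 0 ↔ ∀ r x, φ (r * x) = r * φ x := by
  constructor
  · rintro ⟨s, rfl⟩ r x
    simp [mul_left_comm]
  · intro h
    exact ⟨φ 1, LinearMap.ext fun x => by simpa [mul_comm] using (h x 1).symm⟩

lemma mem_diffOpFilt_iff (n : ℕ) (φ : R →ₗ[k] R) :
    φ ∈ DiffOpFilt k R n ↔
      KaehlerDifferential.ideal k R ^ (n + 1) ≤ Ideal.torsionOf (R ⊗[k] R) (R →ₗ[k] R) φ := by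
  induction n generalizing φ with
  | zero => rw [zero_add, pow_one, kaehlerIdeal_le_torsionOf_iff, mem_diffOpFilt_zero_iff]
  | succ n ih =>
    set I := KaehlerDifferential.ideal k R
    calc φ ∈ DiffOpFilt k R (n + 1)
        ↔ ∀ r : R, ((1 : R) ⊗ₜ[k] r - r ⊗ₜ[k] (1 : R)) • φ ∈ DiffOpFilt k R n := by
          simp only [DiffOpFilt, Set.mem_ofPred_eq, one_tmul_sub_tmul_one_smul]
      _ ↔ ∀ r : R, ∀ a ∈ I ^ (n + 1), a * ((1 : R) ⊗ₜ[k] r - r ⊗ₜ[k] (1 : R)) ∈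
            Ideal.torsionOf (R ⊗[k] R) (R →ₗ[k] R) φ := by
          simp only [ih, SetLike.le_def, Ideal.mem_torsionOf_smul_iff]
      _ ↔ ∀ a ∈ I ^ (n + 1), I ≤ Ideal.torsionOf (R ⊗[k] R) (R →ₗ[k] R) (a • φ) := by
          simp only [I, ← KaehlerDifferential.span_range_eq_ideal, Ideal.span_le,
            Set.range_subset_iff, SetLike.mem_coe, Ideal.mem_torsionOf_smul_iff, mul_comm]
          exact forall_comm.trans (forall_congr' fun a => forall_comm)
      _ ↔ I ^ (n + 1) * I ≤ Ideal.torsionOf (R ⊗[k] R) (R →ₗ[k] R) φ := by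
          rw [Ideal.mul_le]
          simp only [SetLike.le_def, Ideal.mem_torsionOf_smul_iff, mul_comm]
      _ ↔ I ^ (n + 1 + 1) ≤ Ideal.torsionOf (R ⊗[k] R) (R →ₗ[k] R) φ := by rw [← pow_succ]

lemma mem_diffOps_iff_le_radical [Algebra.FiniteType k R] (φ : R →ₗ[k] R) :
    φ ∈ DiffOps k R ↔
      KaehlerDifferential.ideal k R ≤ (Ideal.torsionOf (R ⊗[k] R) (R →ₗ[k] R) φ).radical := by
  rw [← Ideal.exists_pow_le_iff_le_radical (KaehlerDifferential.ideal_fg k R)]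
  simp only [DiffOps, Set.mem_ofPred_eq, mem_diffOpFilt_iff]
  constructor
  · rintro ⟨n, h⟩
    exact ⟨n + 1, h⟩
  · rintro ⟨n, h⟩
    exact ⟨n, (Ideal.pow_le_pow_right n.le_succ).trans h⟩

end TensorAction

lemma mem_diffOps_iff_exists_frobenius {k R : Type*} [Field k] [CommRing R] [Algebra k R]
    [Algebra.FiniteType k R] (p : ℕ) [Fact p.Prime] [CharP R p] (φ : R →ₗ[k] R) :
    φ ∈ DiffOps k R ↔ ∃ e, ∀ r x : R, φ (r ^ p ^ e * x) = r ^ p ^ e * φ x := by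
  have : Nontrivial R := CharP.nontrivial_of_char_ne_one (Fact.out : p.Prime).ne_one
  have : CharP (R ⊗[k] R) p := charP_tensorProduct p
  have hfg := KaehlerDifferential.ideal_fg k R
  rw [← KaehlerDifferential.span_range_eq_ideal] at hfg
  rw [mem_diffOps_iff_le_radical, ← KaehlerDifferential.span_range_eq_ideal,
    Ideal.span_range_le_radical_iff hfg (Fact.out : p.Prime).one_lt]
  simp only [one_tmul_sub_tmul_one_pow_char_pow, one_tmul_sub_tmul_one_mem_torsionOf_iff]

theorem diffOps_eq_iUnion_end_frobenius_powers_general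
    (k R : Type*) [Field k] [CommRing R] [Algebra k R]
    (p : ℕ) [Fact p.Prime] [CharP R p] [Algebra.FiniteType k R] :
    DiffOps k R =
      ⋃ n : ℕ, {φ : R →ₗ[k] R | ∀ r x : R, φ (r ^ p ^ n * x) = r ^ p ^ n * φ x} := by
  ext φ
  simpa using mem_diffOps_iff_exists_frobenius p φ

theorem diffOps_eq_iUnion_end_frobenius_powers
    (k R : Type*) [Field k] [PerfectField k] [CommRing R] [Algebra k R]
    (p : ℕ) [Fact p.Prime] [CharP k p] [CharP R p] [Algebra.FiniteType k R] :
    DiffOps k R =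
      ⋃ n : ℕ, {φ : R →ₗ[k] R | ∀ r x : R, φ (r ^ p ^ n * x) = r ^ p ^ n * φ x} :=
  diffOps_eq_iUnion_end_frobenius_powers_general k R p
end

section
/- Let R be a commutative ring of prime characteristic p that is finitely generated over a perfect field, and let n ≥ 1. Then R is a finitely generated module over its subring R^{p^n} of p^n-th powers. -/
/-!
STATEMENT 4.  Let `k` be a perfect field of characteristic `p > 0`, `R` a finitely
generated `k`-algebra, and `n ≥ 1`.  Then `R` is a finitely generated module over its
subring `R^{pⁿ}` of `pⁿ`-th powers (the range of the `n`-fold Frobenius endomorphism).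
-/

theorem finite_over_frobenius_power_subring
    (k R : Type*) [Field k] [PerfectField k] [CommRing R] [Algebra k R]
    (p : ℕ) [Fact p.Prime] [CharP k p] [CharP R p] [Algebra.FiniteType k R]
    (n : ℕ) (hn : 1 ≤ n) :
    Module.Finite ((iterateFrobenius R p n).range) R := by
  classical
  obtain ⟨s, hs⟩ := (inferInstance : Algebra.FiniteType k R).out
  set q := p ^ n with hqdef
  have hp1 : 1 < p := (Fact.out : p.Prime).one_lt
  have hq1 : 1 < q := Nat.one_lt_pow (by omega) hp1
  haveI : NeZero q := ⟨by omega⟩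
  set A := (iterateFrobenius R p n).range with hA
  -- the generating set: monomials in the generators with exponents < q
  set G : Set R := Set.range (fun f : s → Fin q => ∏ i : s, (i : R) ^ (f i : ℕ)) with hG
  have hGfin : G.Finite := Set.finite_range _
  have hpow : ∀ x : R, x ^ q ∈ A := fun x => ⟨x, rfl⟩
  have h1 : (1 : R) ∈ G := ⟨fun _ => 0, by simp⟩
  -- products of two elements of G lie in the span of G
  have hmul : ∀ x ∈ G, ∀ y ∈ G, x * y ∈ Submodule.span A G := by
    rintro _ ⟨f, rfl⟩ _ ⟨g, rfl⟩
    have key : (∏ i : s, (i : R) ^ (f i : ℕ)) * (∏ i : s, (i : R) ^ (g i : ℕ)) =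
        ((∏ i : s, (i : R) ^ (((f i : ℕ) + g i) / q)) ^ q) *
          ∏ i : s, (i : R) ^ (((f i : ℕ) + g i) % q) := by
      rw [← Finset.prod_mul_distrib, ← Finset.prod_pow, ← Finset.prod_mul_distrib]
      refine Finset.prod_congr rfl fun i _ => ?_
      rw [← pow_add, ← pow_mul, ← pow_add]
      congr 1
      exact (Nat.div_add_mod' _ q).symm
    rw [key]
    refine Submodule.smul_mem _ (⟨_, hpow (∏ i : s, (i : R) ^ (((f i : ℕ) + g i) / q))⟩ : A) ?_
    exact Submodule.subset_span ⟨fun i => ⟨((f i : ℕ) + g i) % q, Nat.mod_lt _ (by omega)⟩, rfl⟩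
  constructor
  rw [Submodule.fg_def]
  refine ⟨G, hGfin, ?_⟩
  rw [eq_top_iff]
  rintro r -
  have hr : r ∈ Algebra.adjoin k (s : Set R) := hs ▸ trivial
  induction hr using Algebra.adjoin_induction with
  | mem x hx =>
      refine Submodule.subset_span ⟨fun i => if i = ⟨x, hx⟩ then 1 else 0, ?_⟩
      show (∏ i : s, (i : R) ^ (Fin.val (if i = ⟨x, hx⟩ then 1 else 0))) = x
      rw [Fintype.prod_eq_single (⟨x, hx⟩ : s) (fun b hb => by simp [hb])]
      simp [Fin.val_one', Nat.mod_eq_of_lt hq1]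
  | algebraMap c =>
      obtain ⟨c', hc'⟩ := (bijective_iterateFrobenius k p n).surjective c
      have : algebraMap k R c = (algebraMap k R c') ^ q := by
        rw [← map_pow]; congr 1; rw [← hc']; rfl
      rw [this, ← mul_one ((algebraMap k R c') ^ q)]
      exact Submodule.smul_mem _ (⟨_, hpow (algebraMap k R c')⟩ : A)
        (Submodule.subset_span h1)
  | add x y hx hy hx' hy' => exact Submodule.add_mem _ hx' hy'
  | mul x y hx hy hx' hy' =>
      have h := Submodule.mul_mem_mul hx' hy'
      rw [Submodule.span_mul_span] at h
      exact Submodule.span_le.mpr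
        (by rintro _ ⟨a, ha, b, hb, rfl⟩; exact hmul a ha b hb) h
end

section
/- Let X be a scheme, D an effective Cartier divisor on X with associated section s of the line bundle O_X(D), and F : X → X the (e-fold iterate of the) absolute Frobenius. If the O_X-module map O_X → F^e_* O_X(D), 1 ↦ s, splits for some e ≥ 1, then the map O_X → F^{e+1}_* O_X(pD), 1 ↦ s^p, also splits; i.e., stable Frobenius splitting along D implies stable Frobenius splitting along pD. -/
/-!
STATEMENT 9.  Let `X` be a variety over an algebraically closed field of characteristic
`p > 0`, `D` an effective Cartier divisor with canonical section `s` of `O_X(D)`, and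
`F` the absolute Frobenius.  If `O_X → F^e_* O_X(D)`, `1 ↦ s`, splits for some `e ≥ 1`,
then `O_X → F^{e+1}_* O_X(pD)`, `1 ↦ s^p`, also splits.

We formalize this in the (affine) model where `X = Spec R`, the effective Cartier
divisor `D` is cut out by a nonzerodivisor `s ∈ R` (so that `O_X(D)` is trivialized and
its canonical section corresponds to `s`):  a splitting of `O_X → F^e_* O_X(D)`,
`1 ↦ s`, is an additive map `φ : R → R` with `φ(a^{p^e} x) = a φ(x)` and `φ(s) = 1`.
-/

/-- `R` is Frobenius split along the divisor of `s` at level `e`:  there is an additive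
`φ : F^e_* O(div s) → O`, i.e. `φ(a^{p^e}·x) = a·φ(x)`, splitting `1 ↦ s`, i.e.
`φ(s) = 1`. -/
def FrobSplitAlong (R : Type*) [CommRing R] (p : ℕ) (e : ℕ) (s : R) : Prop :=
  ∃ φ : R →+ R, (∀ a x : R, φ (a ^ p ^ e * x) = a * φ x) ∧ φ s = 1

theorem stably_split_along_p_mul
    (R : Type*) [CommRing R] (p : ℕ) [Fact p.Prime] [CharP R p]
    (s : R) (hs : s ∈ nonZeroDivisors R)
    (e : ℕ) (he : 1 ≤ e) (h : FrobSplitAlong R p e s) :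
    FrobSplitAlong R p (e + 1) (s ^ p) := by
  obtain ⟨φ, hφ, hφs⟩ := h
  -- φ'(x) = φ (φ (s * x ^ p ^ (e-1)))
  refine ⟨AddMonoidHom.mk' (fun x => φ (φ (s * x ^ p ^ (e - 1)))) ?_, ?_, ?_⟩
  · intro a b
    rw [add_pow_char_pow, mul_add, map_add, map_add]
  · intro a x
    simp only [AddMonoidHom.mk'_apply]
    have h1 : s * (a ^ p ^ (e + 1) * x) ^ p ^ (e - 1)
        = (a ^ p ^ e) ^ p ^ e * (s * x ^ p ^ (e - 1)) := by
      have h2 : (a ^ p ^ (e + 1)) ^ p ^ (e - 1) = (a ^ p ^ e) ^ p ^ e := by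
        rw [← pow_mul, ← pow_mul, ← pow_add, ← pow_add]
        congr 2
        omega
      rw [mul_pow, h2]
      ring
    rw [h1, hφ, hφ]
  · simp only [AddMonoidHom.mk'_apply]
    have h1 : s * (s ^ p) ^ p ^ (e - 1) = s ^ p ^ e * s := by
      have h2 : (s ^ p) ^ p ^ (e - 1) = s ^ p ^ e := by
        rw [← pow_mul, ← pow_succ']
        congr 2
        omega
      rw [h2, mul_comm]
    rw [h1, hφ, hφs, mul_one, hφs]
end

section
/- Let X be a Frobenius split variety over a field of characteristic p > 0, and let Y ⊆ X be an effective Cartier divisor that is compatibly Frobenius split (the splitting φ : F_* O_X → O_X satisfies φ(F_* I_Y) ⊆ I_Y). Then X is Frobenius split along the divisor (p−1)Y, i.e. the map O_X → F_* O_X((p−1)Y), 1 ↦ s^{p−1}, splits, where s is the canonical section of O_X(Y). -/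
namespace AddMonoidHom

variable {M R : Type*} [AddCommMonoid M] [Semiring R] {s : R}

noncomputable def divLeft (f : M →+ R) (hs : IsLeftRegular s) (hf : ∀ x, s ∣ f x) : M →+ R where
  toFun x := (hf x).choose
  map_zero' := hs <| show s * _ = s * _ by rw [← (hf 0).choose_spec, map_zero, mul_zero]
  map_add' x y := hs <| show s * _ = s * _ by
    rw [mul_add, ← (hf x).choose_spec, ← (hf y).choose_spec, ← (hf (x + y)).choose_spec, map_add]

@[simp]
theorem mul_divLeft_apply (f : M →+ R) (hs : IsLeftRegular s) (hf : ∀ x, s ∣ f x) (x : M) :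
    s * f.divLeft hs hf x = f x :=
  (hf x).choose_spec.symm

end AddMonoidHom

theorem frobSplitAlong_pow_sub_one_mul {R : Type*} [CommRing R] {p e : ℕ} (hp : p ≠ 0)
    {s t : R} (hs : IsLeftRegular s) (φ : R →+ R) (hφ : ∀ a x : R, φ (a ^ p ^ e * x) = a * φ x)
    (hφt : φ t = 1) (hcompat : ∀ x, s ∣ φ (s * x)) :
    FrobSplitAlong R p e (s ^ (p ^ e - 1) * t) := by
  let ψ := (φ.comp (AddMonoidHom.mulLeft s)).divLeft hs hcompat
  have hψ (x : R) : s * ψ x = φ (s * x) := AddMonoidHom.mul_divLeft_apply _ hs hcompat x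
  refine ⟨ψ, fun a x ↦ hs ?_, hs ?_⟩
  · show s * _ = s * _
    rw [hψ, mul_left_comm, hφ, ← hψ, mul_left_comm]
  · have hpow : s * s ^ (p ^ e - 1) = s ^ p ^ e := by
      rw [← pow_succ', Nat.sub_add_cancel (Nat.one_le_iff_ne_zero.2 (pow_ne_zero e hp))]
    show s * _ = s * _
    rw [hψ, ← mul_assoc, hpow, hφ, hφt, mul_one]

theorem split_along_p_sub_one_of_compatibly_split_general
    (R : Type*) [CommRing R] (p : ℕ) [Fact p.Prime]
    (s : R) (hs : s ∈ nonZeroDivisors R)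
    (φ : R →+ R) (hφlin : ∀ a x : R, φ (a ^ p * x) = a * φ x) (hφ1 : φ 1 = 1)
    (hcompat : ∀ x ∈ Ideal.span {s}, φ x ∈ Ideal.span {s}) :
    FrobSplitAlong R p 1 (s ^ (p - 1)) := by
  have hdvd (x : R) : s ∣ φ (s * x) :=
    Ideal.mem_span_singleton.1 <| hcompat _ <| Ideal.mem_span_singleton.2 (dvd_mul_right s x)
  simpa using frobSplitAlong_pow_sub_one_mul (e := 1) (Fact.out : p.Prime).ne_zero
    (isRegular_iff_mem_nonZeroDivisors.2 hs).left φ (by simpa using hφlin) hφ1 hdvd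

theorem split_along_p_sub_one_of_compatibly_split
    (R : Type*) [CommRing R] (p : ℕ) [Fact p.Prime] [CharP R p]
    (s : R) (hs : s ∈ nonZeroDivisors R)
    (φ : R →+ R) (hφlin : ∀ a x : R, φ (a ^ p * x) = a * φ x) (hφ1 : φ 1 = 1)
    (hcompat : ∀ x ∈ Ideal.span {s}, φ x ∈ Ideal.span {s}) :
    FrobSplitAlong R p 1 (s ^ (p - 1)) :=
  split_along_p_sub_one_of_compatibly_split_general R p s hs φ hφlin hφ1 hcompat
end
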